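/- arXiv:2604.24241 — 4 statements merged into one kernel-verified Lean document; each statement's English description precedes it below -/
import Mathlib

section
/- Let G be a 1-binding graph and let S be a nonempty subset of V(G) with |S| = s such that the graph G − S has at least s + 2 odd components (connected components with an odd number of vertices). Then at most s of the odd components of G − S consist of a single vertex; equivalently, at least two odd components of G − S have at least 3 vertices. -/
open scoped Classical

/-- The join `G₁ ∨ G₂` of two graphs: all edges within each part, plus all
possible edges between the two parts. -/
def graphJoin {α β : Type*} (G : SimpleGraph α) (H : SimpleGraph β) : SimpleGraph (α ⊕ β) where
  Adj u v := match u, v with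
    | Sum.inl u, Sum.inl v => G.Adj u v
    | Sum.inr u, Sum.inr v => H.Adj u v
    | Sum.inl _, Sum.inr _ => True
    | Sum.inr _, Sum.inl _ => True
  symm := ⟨fun u v => by cases u <;> cases v <;> simp [SimpleGraph.adj_comm]⟩
  loopless := ⟨fun u => by cases u <;> simp⟩

/-- The `A_α`-spectral radius of a finite simple graph: the largest (real) eigenvalue,
i.e. the supremum of the real roots of the characteristic polynomial, of the matrix
`A_α(G) = α·D(G) + (1-α)·A(G)`. -/
noncomputable def rhoAlpha (a : ℝ) {V : Type*} [Fintype V] [DecidableEq V]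
    (G : SimpleGraph V) : ℝ :=
  sSup {μ : ℝ | (Matrix.charpoly
    (a • Matrix.diagonal (fun v => (G.degree v : ℝ)) + (1 - a) • G.adjMatrix ℝ)).IsRoot μ}

/-- The neighbourhood `N_G(X)` of a set of vertices `X`: all vertices having a
neighbour in `X`. -/
def nbhd {V : Type*} (G : SimpleGraph V) (X : Set V) : Set V :=
  {v | ∃ x ∈ X, G.Adj x v}

/-- `G` is 1-binding, i.e. `bind(G) ≥ 1`: every nonempty `X ⊆ V(G)` with
`N_G(X) ≠ V(G)` satisfies `|N_G(X)|/|X| ≥ 1`. -/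
def IsOneBinding {V : Type*} [Fintype V] (G : SimpleGraph V) : Prop :=
  ∀ X : Set V, X.Nonempty → nbhd G X ≠ Set.univ → X.ncard ≤ (nbhd G X).ncard

/-- The graph `K_1 ∨ (K_{n-5} ∪ K_3 ∪ K_1)`. -/
def specialGraph (n : ℕ) :
    SimpleGraph (Fin 1 ⊕ ((Fin (n - 5) ⊕ Fin 3) ⊕ Fin 1)) :=
  graphJoin (⊤ : SimpleGraph (Fin 1))
    (((⊤ : SimpleGraph (Fin (n - 5))) ⊕g (⊤ : SimpleGraph (Fin 3))) ⊕g
      (⊤ : SimpleGraph (Fin 1)))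

/-- The graph `K_s ∨ (K_{n-2s-3} ∪ K_3 ∪ sK_1)`. -/
def extremalGraph (s n : ℕ) :
    SimpleGraph (Fin s ⊕ ((Fin (n - 2 * s - 3) ⊕ Fin 3) ⊕ Fin s)) :=
  graphJoin (⊤ : SimpleGraph (Fin s))
    (((⊤ : SimpleGraph (Fin (n - 2 * s - 3))) ⊕g (⊤ : SimpleGraph (Fin 3))) ⊕g
      (⊥ : SimpleGraph (Fin s)))

/-!
The vertices forming singleton components of `G - S` have all their neighbours in `S`, so the
binding condition applied to the set of these vertices bounds their number by `|S| = s`. Every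
odd component has either one vertex or at least three, so at least `(s + 2) - s = 2` odd
components have at least three vertices.
-/

theorem SimpleGraph.ConnectedComponent.not_adj_of_ncard_supp_eq_one {W : Type*}
    {H : SimpleGraph W} {c : H.ConnectedComponent} (hc : c.supp.ncard = 1) {v w : W}
    (hv : v ∈ c.supp) : ¬H.Adj v w := fun hadj => by
  obtain ⟨a, ha⟩ := Set.ncard_eq_one.mp hc
  have hw := c.mem_supp_of_adj_mem_supp hv hadj
  rw [ha, Set.mem_singleton_iff] at hv hw
  exact hadj.ne (hv.trans hw.symm)

namespace IsOneBinding

variable {V : Type*} [Fintype V] {G : SimpleGraph V}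

theorem ncard_le_of_nbhd_subset (hbind : IsOneBinding G) {X T : Set V} (hXT : Disjoint X T)
    (hN : nbhd G X ⊆ T) : X.ncard ≤ T.ncard := by
  rcases X.eq_empty_or_nonempty with rfl | ⟨x, hx⟩
  · simp
  have hN_ne : nbhd G X ≠ Set.univ := fun h =>
    hXT.notMem_of_mem_left hx (hN (h ▸ Set.mem_univ x))
  exact (hbind X ⟨x, hx⟩ hN_ne).trans (Set.ncard_le_ncard hN)

theorem ncard_singleton_components_le (hbind : IsOneBinding G) (S : Set V) :
    {c : (G.induce Sᶜ).ConnectedComponent | c.supp.ncard = 1}.ncard ≤ S.ncard := by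
  set X : Set (Sᶜ : Set V) := {v | ((G.induce Sᶜ).connectedComponentMk v).supp.ncard = 1}
  have hX : {c : (G.induce Sᶜ).ConnectedComponent | c.supp.ncard = 1} ⊆
      (G.induce Sᶜ).connectedComponentMk '' X := fun c hc => by
    obtain ⟨v, rfl⟩ := c.nonempty_supp
    exact ⟨v, hc, rfl⟩
  have hN : nbhd G (Subtype.val '' X) ⊆ S := by
    rintro u ⟨_, ⟨v, hv, rfl⟩, hadj⟩
    by_contra hu
    exact SimpleGraph.ConnectedComponent.not_adj_of_ncard_supp_eq_one hv rfl
      (w := ⟨u, hu⟩) hadj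
  calc _ ≤ ((G.induce Sᶜ).connectedComponentMk '' X).ncard := Set.ncard_le_ncard hX
    _ ≤ X.ncard := Set.ncard_image_le
    _ = (Subtype.val '' X).ncard := (Set.ncard_image_of_injective _ Subtype.val_injective).symm
    _ ≤ S.ncard := hbind.ncard_le_of_nbhd_subset
        (Set.disjoint_left.mpr fun _ ⟨v, _, hv⟩ => hv ▸ v.2) hN

end IsOneBinding

theorem Set.ncard_setOf_odd_le {ι : Type*} [Finite ι] (f : ι → ℕ) :
    {i | Odd (f i)}.ncard ≤ {i | Odd (f i) ∧ f i = 1}.ncard + {i | Odd (f i) ∧ 3 ≤ f i}.ncard := by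
  refine (Set.ncard_le_ncard fun i (hi : Odd (f i)) => ?_).trans (Set.ncard_union_le _ _)
  obtain ⟨k, hk⟩ := hi
  rcases k.eq_zero_or_pos with rfl | hk₀
  · exact Or.inl ⟨⟨0, hk⟩, hk⟩
  · exact Or.inr ⟨⟨k, hk⟩, by omega⟩

theorem oneBinding_odd_components_general
    {V : Type*} [Fintype V] (G : SimpleGraph V)
    (hbind : IsOneBinding G)
    (S : Set V) (s : ℕ) (hs : S.ncard = s)
    (hodd : s + 2 ≤
      {c : (G.induce (Sᶜ : Set V)).ConnectedComponent | Odd c.supp.ncard}.ncard) :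
    {c : (G.induce (Sᶜ : Set V)).ConnectedComponent |
        Odd c.supp.ncard ∧ c.supp.ncard = 1}.ncard ≤ s ∧
    2 ≤ {c : (G.induce (Sᶜ : Set V)).ConnectedComponent |
        Odd c.supp.ncard ∧ 3 ≤ c.supp.ncard}.ncard := by
  have hsingle : {c : (G.induce (Sᶜ : Set V)).ConnectedComponent |
      Odd c.supp.ncard ∧ c.supp.ncard = 1}.ncard ≤ s :=
    hs ▸ (Set.ncard_le_ncard fun _ hc => hc.2).trans (hbind.ncard_singleton_components_le S)
  have hsplit := Set.ncard_setOf_odd_le fun c : (G.induce (Sᶜ : Set V)).ConnectedComponent =>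
    c.supp.ncard
  exact ⟨hsingle, by omega⟩

/-- **Claim.** Let `G` be a 1-binding graph and `S ⊆ V(G)` nonempty with `|S| = s` such
that `G - S` has at least `s + 2` odd components.  Then at most `s` of the odd components
of `G - S` are single vertices; equivalently, at least two odd components of `G - S`
have at least `3` vertices. -/
theorem oneBinding_odd_components
    {V : Type*} [Fintype V] [DecidableEq V] (G : SimpleGraph V)
    (hbind : IsOneBinding G)
    (S : Set V) (hS : S.Nonempty) (s : ℕ) (hs : S.ncard = s)
    (hodd : s + 2 ≤
      {c : (G.induce (Sᶜ : Set V)).ConnectedComponent | Odd c.supp.ncard}.ncard) :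
    {c : (G.induce (Sᶜ : Set V)).ConnectedComponent |
        Odd c.supp.ncard ∧ c.supp.ncard = 1}.ncard ≤ s ∧
    2 ≤ {c : (G.induce (Sᶜ : Set V)).ConnectedComponent |
        Odd c.supp.ncard ∧ 3 ≤ c.supp.ncard}.ncard :=
  oneBinding_odd_components_general G hbind S s hs hodd
end

section
/- Let α ∈ [0,1) and let n ≥ 6 be an integer. Then ρ_α(K_1 ∨ (K_{n−5} ∪ K_3 ∪ K_1)) is a root of the quartic polynomial φ(x) = x⁴ − ((1+α)n + 2α − 4)x³ + (αn² + (2α² − α + 1)n + α² − 6α − 11)x² − ((2α² + 2α)n² + (α³ − 11α² − 2α − 6)n + 32α² − 62α + 32)x + (α³ + 2α²)n² − (9α³ + 5α² + 2α + 2)n + 34α³ − 39α² + 8α + 12, and in fact it is the largest real root of φ. -/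
open scoped Classical

/-!
The vertices of `K_1 ∨ (K_{n-5} ∪ K_3 ∪ K_1)` fall into four classes of true twins (centre,
`K_{n-5}`, `K_3`, pendant vertex), so `A_α` is a blow-up `diag (c ∘ π) + K (π ·) (π ·)` of a
symmetric `4 × 4` matrix `K = (1 - α) (A(K_{1,3}) + I)`. Vectors constant on classes lift
eigenvectors of the quotient matrix `B`, with `det (x - B) = φ x`, to eigenvectors of `A_α`,
so every root of `φ` is at most `ρ_α`; class sums push eigenvectors of `A_α` down to
eigenvectors of `Bᵀ`, which gives nothing only for an eigenvector with vanishing class sums.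
On such a vector `A_α` acts as the diagonal `c ∘ π`, so its eigenvalue is then some `c w`, which is strictly smaller
than the diagonal entry `c w + (1 - α)` and hence than `ρ_α`. So `ρ_α` is a root of `φ`.
-/

open Matrix Finset

theorem Matrix.isRoot_charpoly_iff_exists_mulVec_eq_smul {n K : Type*} [Fintype n] [DecidableEq n]
    [Field K] (M : Matrix n n K) (μ : K) :
    M.charpoly.IsRoot μ ↔ ∃ v ≠ 0, M *ᵥ v = μ • v := by
  rw [← charpoly_toLin', ← Module.End.hasEigenvalue_iff_isRoot_charpoly,
    Module.End.hasEigenvalue_iff, Submodule.ne_bot_iff]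
  simp [and_comm]

theorem Matrix.finite_setOf_isRoot_charpoly {n K : Type*} [Fintype n] [DecidableEq n] [Field K]
    (M : Matrix n n K) : {μ | M.charpoly.IsRoot μ}.Finite :=
  Polynomial.finite_setOfPred_isRoot M.charpoly_monic.ne_zero

namespace Matrix.IsHermitian

variable {n : Type*} [Fintype n] [DecidableEq n] {M : Matrix n n ℝ}

theorem isRoot_charpoly_eigenvalues (hM : M.IsHermitian) (i : n) :
    M.charpoly.IsRoot (hM.eigenvalues i) :=
  (mem_spectrum_iff_isRoot_charpoly).mp (hM.eigenvalues_mem_spectrum_real i)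

theorem isRoot_charpoly_sSup [Nonempty n] (hM : M.IsHermitian) :
    M.charpoly.IsRoot (sSup {μ | M.charpoly.IsRoot μ}) :=
  Set.Nonempty.csSup_mem (s := {μ | M.charpoly.IsRoot μ})
    ⟨_, hM.isRoot_charpoly_eigenvalues (Classical.arbitrary n)⟩ M.finite_setOf_isRoot_charpoly

theorem apply_self_le_sSup (hM : M.IsHermitian) (u : n) :
    M u u ≤ sSup {μ | M.charpoly.IsRoot μ} := by
  have hbdd := M.finite_setOf_isRoot_charpoly.bddAbove
  set U : Matrix n n ℝ := (hM.eigenvectorUnitary : Matrix n n ℝ)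
  have hU : U * star U = 1 := mem_unitaryGroup_iff.mp hM.eigenvectorUnitary.2
  have hnorm : ∑ k, U u k * U u k = 1 := by
    simpa [mul_apply, star_apply, one_apply] using congrFun (congrFun hU u) u
  have hdiag : M u u = ∑ k, hM.eigenvalues k * (U u k * U u k) := by
    conv_lhs => rw [hM.spectral_theorem, Unitary.conjStarAlgAut_apply]
    rw [mul_apply]
    refine Finset.sum_congr rfl fun k _ => ?_
    simp only [RCLike.ofReal_real_eq_id, CompTriple.comp_eq, mul_diagonal,
      eigenvectorUnitary_apply, star_apply, star_trivial, U]
    ring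
  calc M u u = ∑ k, hM.eigenvalues k * (U u k * U u k) := hdiag
    _ ≤ ∑ k, sSup {μ | M.charpoly.IsRoot μ} * (U u k * U u k) :=
        Finset.sum_le_sum fun k _ => mul_le_mul_of_nonneg_right
          (le_csSup hbdd (hM.isRoot_charpoly_eigenvalues k)) (mul_self_nonneg _)
    _ = sSup {μ | M.charpoly.IsRoot μ} := by rw [← Finset.mul_sum, hnorm, mul_one]

end Matrix.IsHermitian

section Blowup

variable {V W R : Type*} [CommRing R]

def blowupMatrix [DecidableEq V] (π : V → W) (c : W → R) (K : Matrix W W R) : Matrix V V R :=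
  diagonal (c ∘ π) + K.submatrix π π

def fiberSum [Fintype V] [DecidableEq W] (π : V → W) (v : V → R) : W → R :=
  fun w => ∑ u with π u = w, v u

def quotientMatrix [Fintype V] [DecidableEq W] [Fintype W] (π : V → W) (c : W → R)
    (K : Matrix W W R) : Matrix W W R :=
  diagonal c + K * diagonal (fiberSum π 1)

variable [Fintype V] [DecidableEq V] [Fintype W] [DecidableEq W]
  (π : V → W) (c : W → R) (K : Matrix W W R)

theorem blowupMatrix_mulVec_apply (v : V → R) (u : V) :
    (blowupMatrix π c K *ᵥ v) u = c (π u) * v u + (K *ᵥ fiberSum π v) (π u) := by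
  simp only [blowupMatrix, add_mulVec, Pi.add_apply, mulVec_diagonal, Function.comp_apply]
  congr 1
  simp only [mulVec, dotProduct, fiberSum, submatrix_apply, Finset.mul_sum]
  rw [← Finset.sum_fiberwise univ π]
  refine Finset.sum_congr rfl fun w _ => Finset.sum_congr rfl fun u' hu' => ?_
  rw [(Finset.mem_filter.mp hu').2]

omit [DecidableEq V] [Fintype W] in
theorem fiberSum_one_apply (w : W) : fiberSum π (1 : V → R) w = #{u | π u = w} := by
  simp [fiberSum]

omit [DecidableEq V] [Fintype W] in
theorem fiberSum_comp (y : W → R) : fiberSum π (y ∘ π) = fiberSum π 1 * y := by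
  ext w
  simp only [fiberSum, Function.comp_apply, Pi.mul_apply, Pi.one_apply, Finset.sum_mul, one_mul]
  exact Finset.sum_congr rfl fun u hu => by rw [(Finset.mem_filter.mp hu).2]

theorem blowupMatrix_mulVec_comp (y : W → R) :
    blowupMatrix π c K *ᵥ (y ∘ π) = (quotientMatrix π c K *ᵥ y) ∘ π := by
  ext u
  rw [blowupMatrix_mulVec_apply, fiberSum_comp]
  simp only [quotientMatrix, add_mulVec, ← mulVec_mulVec, Function.comp_apply, Pi.add_apply,
    mulVec_diagonal]
  rw [show diagonal (fiberSum π 1) *ᵥ y = fiberSum π 1 * y from funext (mulVec_diagonal _ _)]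

theorem fiberSum_blowupMatrix_mulVec (v : V → R) :
    fiberSum π (blowupMatrix π c K *ᵥ v) =
      (diagonal c + diagonal (fiberSum π 1) * K) *ᵥ fiberSum π v := by
  ext w
  have hfiber : ∀ u ∈ ({u | π u = w} : Finset V),
      (blowupMatrix π c K *ᵥ v) u = c w * v u + (K *ᵥ fiberSum π v) w := fun u hu => by
    rw [blowupMatrix_mulVec_apply, (mem_filter.mp hu).2]
  rw [add_mulVec, ← mulVec_mulVec, Pi.add_apply, mulVec_diagonal, mulVec_diagonal, fiberSum,
    sum_congr rfl hfiber, sum_add_distrib, ← mul_sum, sum_const, nsmul_eq_mul, fiberSum_one_apply]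
  rfl

omit [DecidableEq V] in
theorem transpose_quotientMatrix (hK : K.IsSymm) :
    (quotientMatrix π c K)ᵀ = diagonal c + diagonal (fiberSum π 1) * K := by
  rw [quotientMatrix, transpose_add, transpose_mul, diagonal_transpose, diagonal_transpose, hK.eq]

omit [Fintype V] [Fintype W] [DecidableEq W] in
theorem blowupMatrix_apply_self (u : V) : blowupMatrix π c K u u = c (π u) + K (π u) (π u) := by
  simp [blowupMatrix]

omit [Fintype V] [Fintype W] [DecidableEq W] in
theorem blowupMatrix_isSymm (hK : K.IsSymm) : (blowupMatrix π c K).IsSymm := by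
  rw [IsSymm, blowupMatrix, transpose_add, diagonal_transpose, transpose_submatrix, hK.eq]

end Blowup

section BlowupSpectrum

variable {V W F : Type*} [Fintype V] [DecidableEq V] [Fintype W] [DecidableEq W] [Field F]
  (π : V → W) (c : W → F) (K : Matrix W W F)

theorem isRoot_charpoly_blowupMatrix_of_isRoot (hπ : Function.Surjective π) {μ : F}
    (hμ : (quotientMatrix π c K).charpoly.IsRoot μ) :
    (blowupMatrix π c K).charpoly.IsRoot μ := by
  obtain ⟨y, hy0, hy⟩ := (isRoot_charpoly_iff_exists_mulVec_eq_smul _ _).mp hμ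
  refine (isRoot_charpoly_iff_exists_mulVec_eq_smul _ _).mpr ⟨y ∘ π, fun h => hy0 ?_, ?_⟩
  · exact hπ.injective_comp_right (h.trans (Pi.zero_comp π).symm)
  · rw [blowupMatrix_mulVec_comp, hy]
    rfl

omit [DecidableEq V] [Fintype W] in
theorem fiberSum_smul (μ : F) (v : V → F) : fiberSum π (μ • v) = μ • fiberSum π v := by
  ext w
  simp [fiberSum, Finset.mul_sum]

theorem isRoot_charpoly_quotientMatrix_of_mulVec_eq_smul (hK : K.IsSymm) {μ : F} {v : V → F}
    (hv : blowupMatrix π c K *ᵥ v = μ • v) (hσ : fiberSum π v ≠ 0) :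
    (quotientMatrix π c K).charpoly.IsRoot μ := by
  rw [← charpoly_transpose, transpose_quotientMatrix π c K hK,
    isRoot_charpoly_iff_exists_mulVec_eq_smul]
  exact ⟨fiberSum π v, hσ, by rw [← fiberSum_blowupMatrix_mulVec, hv, fiberSum_smul]⟩

theorem blowupMatrix_mulVec_of_fiberSum_eq_zero {v : V → F} (hσ : fiberSum π v = 0) (u : V) :
    (blowupMatrix π c K *ᵥ v) u = c (π u) * v u := by
  rw [blowupMatrix_mulVec_apply, hσ, mulVec_zero, Pi.zero_apply, add_zero]

end BlowupSpectrum

theorem isGreatest_roots_charpoly_quotientMatrix {V W : Type*} [Fintype V] [DecidableEq V]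
    [Nonempty V] [Fintype W] [DecidableEq W] {π : V → W} (hπ : Function.Surjective π)
    (c : W → ℝ) {K : Matrix W W ℝ} (hK : K.IsSymm) (hKdiag : ∀ w, 0 < K w w) :
    IsGreatest {x | (quotientMatrix π c K).charpoly.IsRoot x}
      (sSup {μ | (blowupMatrix π c K).charpoly.IsRoot μ}) := by
  set ρ := sSup {μ | (blowupMatrix π c K).charpoly.IsRoot μ}
  have hM : (blowupMatrix π c K).IsHermitian :=
    isHermitian_iff_isSymm.mpr (blowupMatrix_isSymm π c K hK)
  refine ⟨?_, fun x hx => le_csSup (finite_setOf_isRoot_charpoly _).bddAbove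
    (isRoot_charpoly_blowupMatrix_of_isRoot π c K hπ hx)⟩
  obtain ⟨v, hv0, hv⟩ :=
    (isRoot_charpoly_iff_exists_mulVec_eq_smul _ _).mp hM.isRoot_charpoly_sSup
  refine isRoot_charpoly_quotientMatrix_of_mulVec_eq_smul π c K hK hv fun hσ => hv0 ?_
  ext u
  have hcu : c (π u) < ρ := by
    have := hM.apply_self_le_sSup u
    rw [blowupMatrix_apply_self] at this
    linarith [hKdiag (π u)]
  have hvu : (ρ - c (π u)) * v u = 0 := by
    have := congrFun hv u
    rw [blowupMatrix_mulVec_of_fiberSum_eq_zero π c K hσ, Pi.smul_apply, smul_eq_mul] at this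
    linear_combination -this
  exact (mul_eq_zero.mp hvu).resolve_left (sub_ne_zero.mpr hcu.ne')

noncomputable def alphaMatrix (a : ℝ) {V : Type*} [Fintype V] [DecidableEq V]
    (G : SimpleGraph V) : Matrix V V ℝ :=
  a • diagonal (fun v => (G.degree v : ℝ)) + (1 - a) • G.adjMatrix ℝ

theorem rhoAlpha_eq_sSup (a : ℝ) {V : Type*} [Fintype V] [DecidableEq V] (G : SimpleGraph V) :
    rhoAlpha a G = sSup {μ | (alphaMatrix a G).charpoly.IsRoot μ} :=
  rfl

/-- `hG` says that the fibres of `π` are cliques of true twins and that `K` (with ones on its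
diagonal) records which classes are joined. -/
theorem alphaMatrix_eq_blowupMatrix {V W : Type*} [Fintype V] [DecidableEq V] [Fintype W]
    [DecidableEq W] {G : SimpleGraph V} {π : V → W} {K : Matrix W W ℝ}
    (hG : G.adjMatrix ℝ = blowupMatrix π (-1) K) (a : ℝ) :
    alphaMatrix a G =
      blowupMatrix π (fun w => a * (K *ᵥ fiberSum π 1) w - 1) ((1 - a) • K) := by
  have hdeg : ∀ u, (G.degree u : ℝ) = (K *ᵥ fiberSum π 1) (π u) - 1 := by
    intro u
    have := G.adjMatrix_mulVec_const_apply (α := ℝ) (a := 1) (v := u)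
    rw [hG, blowupMatrix_mulVec_apply] at this
    simp only [Pi.neg_apply, Pi.one_apply, Function.const_apply, mul_one, Function.const_one]
      at this
    linarith
  ext u v
  rw [alphaMatrix, hG]
  by_cases huv : u = v
  · subst huv
    simp only [hdeg, blowupMatrix, smul_add, Matrix.add_apply, Matrix.smul_apply,
      diagonal_apply_eq, smul_eq_mul, Function.comp_apply, Pi.neg_apply, Pi.one_apply, mul_neg,
      mul_one, neg_sub, submatrix_apply]
    ring
  · simp [blowupMatrix, diagonal_apply_ne _ huv]

/-- The classes of `specialGraph n`: the centre, `K_{n-5}`, `K_3` and the pendant vertex. They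
are joined according to the star `K_{1,3}`, whose adjacency matrix plus the identity is
`closedStarAdjMatrix`. -/
def specialPartition (n : ℕ) : Fin 1 ⊕ ((Fin (n - 5) ⊕ Fin 3) ⊕ Fin 1) → Fin 4 :=
  Sum.elim (fun _ => 0) (Sum.elim (Sum.elim (fun _ => 1) (fun _ => 2)) (fun _ => 3))

def closedStarAdjMatrix : Matrix (Fin 4) (Fin 4) ℝ :=
  !![1, 1, 1, 1; 1, 1, 0, 0; 1, 0, 1, 0; 1, 0, 0, 1]

theorem specialPartition_surjective {n : ℕ} (hn : 6 ≤ n) :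
    Function.Surjective (specialPartition n) := by
  intro w
  fin_cases w
  exacts [⟨Sum.inl 0, rfl⟩, ⟨Sum.inr (Sum.inl (Sum.inl ⟨0, by omega⟩)), rfl⟩,
    ⟨Sum.inr (Sum.inl (Sum.inr 0)), rfl⟩, ⟨Sum.inr (Sum.inr 0), rfl⟩]

theorem adjMatrix_specialGraph (n : ℕ) :
    (specialGraph n).adjMatrix ℝ =
      blowupMatrix (specialPartition n) (-1) closedStarAdjMatrix := by
  ext u v
  rcases u with u | (u | u) | u <;> rcases v with v | (v | v) | v <;>
    simp [specialGraph, graphJoin, blowupMatrix, specialPartition, closedStarAdjMatrix,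
      diagonal_apply] <;>
    split_ifs <;> norm_num

theorem fiberSum_specialPartition_one {n : ℕ} (hn : 6 ≤ n) :
    fiberSum (specialPartition n) 1 = (![1, (n : ℝ) - 5, 3, 1] : Fin 4 → ℝ) := by
  ext w
  fin_cases w <;> simp only [fiberSum, Finset.sum_filter] <;>
    simp [Fintype.sum_sum_type, specialPartition, Nat.cast_sub (by omega : 5 ≤ n)]

theorem quotientMatrix_specialPartition {n : ℕ} (hn : 6 ≤ n) (α : ℝ) :
    quotientMatrix (specialPartition n)
        (fun w => α * (closedStarAdjMatrix *ᵥ fiberSum (specialPartition n) 1) w - 1)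
        ((1 - α) • closedStarAdjMatrix) =
      !![α * (n - 1), (1 - α) * (n - 5), 3 * (1 - α), 1 - α;
        1 - α, α * (n - 5) + (1 - α) * (n - 6), 0, 0;
        1 - α, 0, 3 * α + 2 * (1 - α), 0;
        1 - α, 0, 0, α] := by
  rw [quotientMatrix, fiberSum_specialPartition_one hn]
  ext i j
  fin_cases i <;> fin_cases j <;>
    simp [closedStarAdjMatrix, mulVec, vecMul, dotProduct, Fin.sum_univ_four] <;> ring

theorem eval_charpoly_quotientMatrix_specialPartition {n : ℕ} (hn : 6 ≤ n) (α x : ℝ) :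
    (quotientMatrix (specialPartition n)
        (fun w => α * (closedStarAdjMatrix *ᵥ fiberSum (specialPartition n) 1) w - 1)
        ((1 - α) • closedStarAdjMatrix)).charpoly.eval x =
      x ^ 4 - ((1 + α) * n + 2 * α - 4) * x ^ 3
      + (α * n ^ 2 + (2 * α ^ 2 - α + 1) * n + α ^ 2 - 6 * α - 11) * x ^ 2
      - ((2 * α ^ 2 + 2 * α) * n ^ 2 + (α ^ 3 - 11 * α ^ 2 - 2 * α - 6) * n
          + 32 * α ^ 2 - 62 * α + 32) * x
      + (α ^ 3 + 2 * α ^ 2) * n ^ 2 - (9 * α ^ 3 + 5 * α ^ 2 + 2 * α + 2) * n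
          + 34 * α ^ 3 - 39 * α ^ 2 + 8 * α + 12 := by
  rw [quotientMatrix_specialPartition hn, eval_charpoly, det_succ_row_zero]
  simp [Fin.sum_univ_succ, det_fin_three, Fin.succAbove]
  ring

theorem rhoAlpha_specialGraph_is_largest_root_general
    (α : ℝ) (hα1 : α < 1) (n : ℕ) (hn : 6 ≤ n)
    (φ : ℝ → ℝ)
    (hφ : ∀ x : ℝ, φ x =
      x ^ 4 - ((1 + α) * n + 2 * α - 4) * x ^ 3
      + (α * n ^ 2 + (2 * α ^ 2 - α + 1) * n + α ^ 2 - 6 * α - 11) * x ^ 2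
      - ((2 * α ^ 2 + 2 * α) * n ^ 2 + (α ^ 3 - 11 * α ^ 2 - 2 * α - 6) * n
          + 32 * α ^ 2 - 62 * α + 32) * x
      + (α ^ 3 + 2 * α ^ 2) * n ^ 2 - (9 * α ^ 3 + 5 * α ^ 2 + 2 * α + 2) * n
          + 34 * α ^ 3 - 39 * α ^ 2 + 8 * α + 12) :
    φ (rhoAlpha α (specialGraph n)) = 0 ∧
      ∀ x : ℝ, φ x = 0 → x ≤ rhoAlpha α (specialGraph n) := by
  have hK : ((1 - α) • closedStarAdjMatrix).IsSymm :=
    IsSymm.smul (by ext i j; fin_cases i <;> fin_cases j <;> rfl) _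
  have hKdiag : ∀ w, 0 < ((1 - α) • closedStarAdjMatrix) w w := by
    intro w
    fin_cases w <;> simpa [closedStarAdjMatrix] using hα1
  have hφ_eval : ∀ x, φ x = _ := fun x =>
    (hφ x).trans (eval_charpoly_quotientMatrix_specialPartition hn α x).symm
  simp only [rhoAlpha_eq_sSup, alphaMatrix_eq_blowupMatrix (adjMatrix_specialGraph n), hφ_eval]
  exact isGreatest_roots_charpoly_quotientMatrix (specialPartition_surjective hn) _ hK hKdiag

/-- For `α ∈ [0,1)` and an integer `n ≥ 6`, `ρ_α(K_1 ∨ (K_{n-5} ∪ K_3 ∪ K_1))` is the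
largest real root of the quartic
`φ(x) = x⁴ - ((1+α)n + 2α - 4)x³ + (αn² + (2α² - α + 1)n + α² - 6α - 11)x²
 - ((2α² + 2α)n² + (α³ - 11α² - 2α - 6)n + 32α² - 62α + 32)x
 + (α³ + 2α²)n² - (9α³ + 5α² + 2α + 2)n + 34α³ - 39α² + 8α + 12`. -/
theorem rhoAlpha_specialGraph_is_largest_root
    (α : ℝ) (hα0 : 0 ≤ α) (hα1 : α < 1) (n : ℕ) (hn : 6 ≤ n)
    (φ : ℝ → ℝ)
    (hφ : ∀ x : ℝ, φ x =
      x ^ 4 - ((1 + α) * n + 2 * α - 4) * x ^ 3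
      + (α * n ^ 2 + (2 * α ^ 2 - α + 1) * n + α ^ 2 - 6 * α - 11) * x ^ 2
      - ((2 * α ^ 2 + 2 * α) * n ^ 2 + (α ^ 3 - 11 * α ^ 2 - 2 * α - 6) * n
          + 32 * α ^ 2 - 62 * α + 32) * x
      + (α ^ 3 + 2 * α ^ 2) * n ^ 2 - (9 * α ^ 3 + 5 * α ^ 2 + 2 * α + 2) * n
          + 34 * α ^ 3 - 39 * α ^ 2 + 8 * α + 12) :
    φ (rhoAlpha α (specialGraph n)) = 0 ∧
      ∀ x : ℝ, φ x = 0 → x ≤ rhoAlpha α (specialGraph n) :=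
  rhoAlpha_specialGraph_is_largest_root_general α hα1 n hn φ hφ
end

section
/- Let α ∈ [0,1], let s ≥ 1 be an integer and let n be an integer with n ≥ 2s + 6. Let M be the real symmetric 4×4 matrix with rows (αn − αs + s − 1, (1−α)√(s(n−2s−3)), (1−α)√(3s), (1−α)s), ((1−α)√(s(n−2s−3)), n + αs − 2s − 4, 0, 0), ((1−α)√(3s), 0, αs + 2, 0), ((1−α)s, 0, 0, αs). Then the second largest eigenvalue of M is at most n + αs − 2s − 4. -/
/-!
The matrix is an arrowhead matrix: off the first row and column it is diagonal, with diagonal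
entries `n + αs - 2s - 4`, `αs + 2`, `αs`, each at most `β := n + αs - 2s - 4` because
`n ≥ 2s + 6`. So the quadratic form of `M` is at most `β ‖x‖²` on the hyperplane `x₀ = 0`.
The span of eigenvectors for the two largest eigenvalues meets that hyperplane in a nonzero
vector, on which the form is at least the smaller of the two eigenvalues; hence the second
largest eigenvalue is at most `β` (the easy half of Courant–Fischer).
-/

open Matrix

namespace Matrix

theorem min_le_of_dotProduct_mulVec_le_on_hyperplane {n : Type*} [Fintype n]
    {A : Matrix n n ℝ} {u v w : n → ℝ} {lam mu β : ℝ}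
    (hu : A *ᵥ u = lam • u) (hv : A *ᵥ v = mu • v)
    (huu : u ⬝ᵥ u = 1) (hvv : v ⬝ᵥ v = 1) (huv : u ⬝ᵥ v = 0)
    (hA : ∀ x, w ⬝ᵥ x = 0 → x ⬝ᵥ A *ᵥ x ≤ β * (x ⬝ᵥ x)) :
    min lam mu ≤ β := by
  have hvu : v ⬝ᵥ u = 0 := by rw [dotProduct_comm, huv]
  obtain ⟨c, d, hcd, hw⟩ : ∃ c d : ℝ, 0 < c ^ 2 + d ^ 2 ∧ w ⬝ᵥ (c • u + d • v) = 0 := by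
    by_cases h : w ⬝ᵥ u = 0 ∧ w ⬝ᵥ v = 0
    · exact ⟨1, 0, by norm_num, by simp [h.1]⟩
    · refine ⟨w ⬝ᵥ v, -(w ⬝ᵥ u), ?_, ?_⟩
      · rw [neg_sq]
        rw [not_and_or] at h
        rcases h with h | h
        · exact add_pos_of_nonneg_of_pos (sq_nonneg _) (sq_pos_of_ne_zero h)
        · exact add_pos_of_pos_of_nonneg (sq_pos_of_ne_zero h) (sq_nonneg _)
      · simp only [dotProduct_add, dotProduct_smul, smul_eq_mul]
        ring
  have hform : (c • u + d • v) ⬝ᵥ A *ᵥ (c • u + d • v) = lam * c ^ 2 + mu * d ^ 2 := by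
    simp only [mulVec_add, mulVec_smul, hu, hv, smul_smul, dotProduct_add, add_dotProduct,
      dotProduct_smul, smul_dotProduct, huu, hvv, huv, hvu, smul_eq_mul]
    ring
  have hnorm : (c • u + d • v) ⬝ᵥ (c • u + d • v) = c ^ 2 + d ^ 2 := by
    simp only [dotProduct_add, add_dotProduct, dotProduct_smul, smul_dotProduct, huu, hvv, huv,
      hvu, smul_eq_mul]
    ring
  have hle := hA _ hw
  rw [hform, hnorm] at hle
  nlinarith [min_le_left lam mu, min_le_right lam mu, sq_nonneg c, sq_nonneg d]

theorem IsHermitian.eigenvalues_sort_castSucc_last_le {m : ℕ}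
    {A : Matrix (Fin (m + 2)) (Fin (m + 2)) ℝ} (hA : A.IsHermitian) {w : Fin (m + 2) → ℝ}
    {β : ℝ} (h : ∀ x, w ⬝ᵥ x = 0 → x ⬝ᵥ A *ᵥ x ≤ β * (x ⬝ᵥ x)) :
    hA.eigenvalues (Tuple.sort hA.eigenvalues (Fin.last m).castSucc) ≤ β := by
  set σ := Tuple.sort hA.eigenvalues
  have hne : σ (Fin.last m).castSucc ≠ σ (Fin.last (m + 1)) :=
    σ.injective.ne (Fin.castSucc_lt_last _).ne
  have hmono : hA.eigenvalues (σ (Fin.last m).castSucc) ≤ hA.eigenvalues (σ (Fin.last (m + 1))) :=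
    Tuple.monotone_sort hA.eigenvalues (Fin.castSucc_lt_last _).le
  have hinner (i j : Fin (m + 2)) :
      (hA.eigenvectorBasis i).ofLp ⬝ᵥ (hA.eigenvectorBasis j).ofLp = if i = j then 1 else 0 := by
    rw [← orthonormal_iff_ite.mp hA.eigenvectorBasis.orthonormal i j,
      EuclideanSpace.inner_eq_star_dotProduct, star_trivial, dotProduct_comm]
  have hmin := min_le_of_dotProduct_mulVec_le_on_hyperplane
    (hA.mulVec_eigenvectorBasis _) (hA.mulVec_eigenvectorBasis _)
    ((hinner _ _).trans (if_pos rfl)) ((hinner _ _).trans (if_pos rfl))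
    ((hinner _ _).trans (if_neg hne)) h
  rwa [min_eq_left hmono] at hmin

theorem dotProduct_mulVec_arrowhead_of_head_eq_zero {R : Type*} [CommRing R]
    (a b₁ b₂ b₃ d₁ d₂ d₃ : R) {x : Fin 4 → R} (hx : x 0 = 0) :
    x ⬝ᵥ !![a, b₁, b₂, b₃; b₁, d₁, 0, 0; b₂, 0, d₂, 0; b₃, 0, 0, d₃] *ᵥ x =
      d₁ * x 1 ^ 2 + d₂ * x 2 ^ 2 + d₃ * x 3 ^ 2 := by
  simp only [dotProduct, mulVec, of_apply, cons_val', cons_val_fin_one, Fin.sum_univ_four,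
    cons_val_zero, hx, mul_zero, cons_val_one, zero_add, cons_val, zero_mul, add_zero]
  ring

end Matrix

theorem second_eigenvalue_le_general
    (α : ℝ) (s n : ℕ) (hn : 2 * s + 6 ≤ n)
    (M : Matrix (Fin 4) (Fin 4) ℝ)
    (hM : M =
      !![α * n - α * s + s - 1, (1 - α) * Real.sqrt (s * ((n : ℝ) - 2 * s - 3)),
          (1 - α) * Real.sqrt (3 * s), (1 - α) * s;
        (1 - α) * Real.sqrt (s * ((n : ℝ) - 2 * s - 3)), (n : ℝ) + α * s - 2 * s - 4, 0, 0;
        (1 - α) * Real.sqrt (3 * s), 0, α * s + 2, 0;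
        (1 - α) * s, 0, 0, α * s])
    (hHerm : M.IsHermitian) :
    hHerm.eigenvalues (Tuple.sort hHerm.eigenvalues 2) ≤ (n : ℝ) + α * s - 2 * s - 4 := by
  have hn' : (2 * s + 6 : ℝ) ≤ n := by exact_mod_cast hn
  have hform (x : Fin 4 → ℝ) (hx : x 0 = 0) :
      x ⬝ᵥ M *ᵥ x ≤ ((n : ℝ) + α * s - 2 * s - 4) * (x ⬝ᵥ x) := by
    rw [hM, dotProduct_mulVec_arrowhead_of_head_eq_zero _ _ _ _ _ _ _ hx]
    simp only [dotProduct, Fin.sum_univ_four, hx, ← sq]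
    nlinarith [sq_nonneg (x 2), sq_nonneg (x 3)]
  exact hHerm.eigenvalues_sort_castSucc_last_le (w := Pi.single 0 1) (by simpa using hform)

/-- Let `α ∈ [0,1]`, `s ≥ 1` and `n ≥ 2s + 6` be integers, and let `M` be the symmetric
matrix `Q^{1/2} B₂ Q^{-1/2}` obtained from the quotient matrix `B₂` of
`A_α(K_s ∨ (K_{n-2s-3} ∪ K_3 ∪ sK_1))`.  Then the second largest eigenvalue of `M`
(the eigenvalues being listed in nonincreasing order, with multiplicity) is at most
`n + αs - 2s - 4`.  Here the eigenvalues are sorted in nondecreasing order by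
`Tuple.sort`, so the second largest one has index `2` in `Fin 4`. -/
theorem second_eigenvalue_le
    (α : ℝ) (hα0 : 0 ≤ α) (hα1 : α ≤ 1) (s n : ℕ) (hs : 1 ≤ s) (hn : 2 * s + 6 ≤ n)
    (M : Matrix (Fin 4) (Fin 4) ℝ)
    (hM : M =
      !![α * n - α * s + s - 1, (1 - α) * Real.sqrt (s * ((n : ℝ) - 2 * s - 3)),
          (1 - α) * Real.sqrt (3 * s), (1 - α) * s;
        (1 - α) * Real.sqrt (s * ((n : ℝ) - 2 * s - 3)), (n : ℝ) + α * s - 2 * s - 4, 0, 0;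
        (1 - α) * Real.sqrt (3 * s), 0, α * s + 2, 0;
        (1 - α) * s, 0, 0, α * s])
    (hHerm : M.IsHermitian) :
    hHerm.eigenvalues (Tuple.sort hHerm.eigenvalues 2) ≤ (n : ℝ) + α * s - 2 * s - 4 :=
  second_eigenvalue_le_general α s n hn M hM hHerm
end

section
/- Let α ∈ [0,1), let s ≥ 1 and q ≥ 2 be integers, and let n_1, …, n_q be positive integers with total sum n − s. If i ≠ j and n_i ≥ n_j, then ρ_α(K_s ∨ (K_{n_1} ∪ ⋯ ∪ K_{n_i} ∪ ⋯ ∪ K_{n_j} ∪ ⋯ ∪ K_{n_q})) < ρ_α(K_s ∨ (K_{n_1} ∪ ⋯ ∪ K_{n_i + 1} ∪ ⋯ ∪ K_{n_j − 1} ∪ ⋯ ∪ K_{n_q})), where in the second graph the i-th complete block has n_i + 1 vertices and the j-th has n_j − 1 vertices and all other blocks are unchanged. -/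
open scoped Classical

/-- The disjoint union `K_{m 0} ∪ K_{m 1} ∪ ⋯ ∪ K_{m (q-1)}` of complete graphs:
two vertices are adjacent iff they are distinct and lie in the same block. -/
def cliquesUnion {q : ℕ} (m : Fin q → ℕ) : SimpleGraph (Σ k : Fin q, Fin (m k)) where
  Adj x y := x.1 = y.1 ∧ x ≠ y
  symm := ⟨by rintro x y ⟨h1, h2⟩; exact ⟨h1.symm, h2.symm⟩⟩
  loopless := ⟨by rintro x ⟨h1, h2⟩; exact h2 rfl⟩

/-!
Let `y ≥ 0` be a Perron vector of `A_α(G)` for `G = K_s ∨ (K_{m₁} ∪ ⋯ ∪ K_{m_q})`. The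
dominating vertices of `K_s` force `y > 0`, and the eigen-equation at a vertex of block `k`
pins its entry down to a common value `b k`, with `b j ≤ b i` when `m j ≤ m i`. Moving one
vertex from block `j` to block `i` while keeping its entry `b j` gives a test vector of the same
norm on the new graph whose `A_α`-form is larger by
`α (m_i (b_i² + b_j²) - 2 (m_j - 1) b_j²) + 2 (1 - α) (m_i b_i b_j - (m_j - 1) b_j²) > 0`,
so the Rayleigh bound `xᵀ A x ≤ ρ_α ‖x‖²` makes `ρ_α` strictly larger.
-/

open Matrix

namespace Matrix

variable {n : Type*} [Fintype n] [DecidableEq n]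

/-- Since `sSup ∅ = 0`, this is the largest eigenvalue only when `M` has a real one, e.g. when `M`
is Hermitian and `n` is nonempty. -/
noncomputable def maxEigenvalue (M : Matrix n n ℝ) : ℝ := sSup {μ : ℝ | M.charpoly.IsRoot μ}

variable {M : Matrix n n ℝ}

theorem le_maxEigenvalue {μ : ℝ} (h : M.charpoly.IsRoot μ) : μ ≤ M.maxEigenvalue :=
  le_csSup (Polynomial.finite_setOfPred_isRoot M.charpoly_monic.ne_zero).bddAbove h

theorem exists_mulVec_eq_smul_of_isRoot_charpoly {μ : ℝ} (h : M.charpoly.IsRoot μ) :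
    ∃ v ≠ 0, M *ᵥ v = μ • v := by
  rw [← mem_spectrum_iff_isRoot_charpoly, ← spectrum_toLin',
    ← Module.End.hasEigenvalue_iff_mem_spectrum] at h
  obtain ⟨v, hv⟩ := h.exists_hasEigenvector
  exact ⟨v, hv.2, by simpa using hv.apply_eq_smul⟩

namespace IsHermitian

variable (hM : M.IsHermitian)
include hM

theorem isRoot_charpoly_maxEigenvalue [Nonempty n] : M.charpoly.IsRoot M.maxEigenvalue := by
  have hroot : M.charpoly.IsRoot (hM.eigenvalues (Classical.arbitrary n)) :=
    mem_spectrum_iff_isRoot_charpoly.1 (hM.eigenvalues_mem_spectrum_real _)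
  exact Set.Nonempty.csSup_mem (s := {μ : ℝ | M.charpoly.IsRoot μ}) ⟨_, hroot⟩
    (Polynomial.finite_setOfPred_isRoot M.charpoly_monic.ne_zero)

theorem posSemidef_maxEigenvalue_smul_one_sub : (M.maxEigenvalue • 1 - M).PosSemidef := by
  rw [posSemidef_iff_isHermitian_and_spectrum_nonneg]
  refine ⟨(isHermitian_one.smul (IsSelfAdjoint.all _)).sub hM, ?_⟩
  rw [← Algebra.algebraMap_eq_smul_one, ← spectrum.singleton_sub_eq]
  rintro _ ⟨_, rfl, μ, hμ, rfl⟩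
  exact sub_nonneg.2 (le_maxEigenvalue (mem_spectrum_iff_isRoot_charpoly.1 hμ))

theorem dotProduct_mulVec_le (x : n → ℝ) : x ⬝ᵥ M *ᵥ x ≤ M.maxEigenvalue * (x ⬝ᵥ x) := by
  have := hM.posSemidef_maxEigenvalue_smul_one_sub.dotProduct_mulVec_nonneg x
  simpa [sub_mulVec, smul_mulVec, dotProduct_smul] using this

theorem apply_self_le_maxEigenvalue (u : n) : M u u ≤ M.maxEigenvalue := by
  simpa [dotProduct, mulVec, Pi.single_apply] using hM.dotProduct_mulVec_le (Pi.single u 1)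

theorem exists_nonneg_mulVec_eq_maxEigenvalue_smul [Nonempty n] (hnn : ∀ u v, 0 ≤ M u v) :
    ∃ y ≠ 0, 0 ≤ y ∧ M *ᵥ y = M.maxEigenvalue • y := by
  obtain ⟨x, hx0, hx⟩ :=
    exists_mulVec_eq_smul_of_isRoot_charpoly hM.isRoot_charpoly_maxEigenvalue
  set y : n → ℝ := fun u => |x u|
  -- `|x|` has Rayleigh quotient at least that of `x`, so it is extremal as well
  have hxy : x ⬝ᵥ M *ᵥ x ≤ y ⬝ᵥ M *ᵥ y := by
    simp only [dotProduct, mulVec, Finset.mul_sum]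
    refine Finset.sum_le_sum fun u _ => Finset.sum_le_sum fun v _ => ?_
    calc x u * (M u v * x v) ≤ |x u * (M u v * x v)| := le_abs_self _
      _ = y u * (M u v * y v) := by simp [y, abs_mul, abs_of_nonneg (hnn u v)]
  have hyy : y ⬝ᵥ y = x ⬝ᵥ x := by simp [y, dotProduct, abs_mul_abs_self]
  have hzero : star y ⬝ᵥ (M.maxEigenvalue • 1 - M) *ᵥ y = 0 := by
    have := hM.dotProduct_mulVec_le y
    rw [hx, dotProduct_smul, smul_eq_mul] at hxy
    simp only [star_trivial, sub_mulVec, smul_mulVec, one_mulVec, dotProduct_sub, dotProduct_smul,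
      smul_eq_mul]
    rw [hyy] at this ⊢
    linarith
  refine ⟨y, fun h => hx0 ?_, fun u => abs_nonneg (x u), ?_⟩
  · ext u; simpa [y] using congrFun h u
  · have := (hM.posSemidef_maxEigenvalue_smul_one_sub.dotProduct_mulVec_zero_iff y).1 hzero
    rwa [sub_mulVec, smul_mulVec, one_mulVec, sub_eq_zero, eq_comm] at this

end IsHermitian

end Matrix

theorem Fintype.sum_sub_sum_of_eq_off_pair {ι : Type*} [Fintype ι] {f g : ι → ℝ} {i j : ι}
    (hij : i ≠ j) (h : ∀ k, k ≠ i → k ≠ j → f k = g k) :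
    ∑ k, f k - ∑ k, g k = (f i - g i) + (f j - g j) := by
  rw [← Finset.sum_sub_distrib]
  exact Fintype.sum_eq_add i j hij fun k hk => sub_eq_zero.2 (h k hk.1 hk.2)

theorem shift_gain_pos {α μ ν x y : ℝ} (hα0 : 0 ≤ α) (hα1 : α ≤ 1) (hμ : 0 ≤ μ) (hνμ : ν ≤ μ)
    (hy : 0 < y) (hyx : y ≤ x) :
    0 < α * (μ * (x ^ 2 + y ^ 2) - 2 * (ν - 1) * y ^ 2)
      + 2 * (1 - α) * (μ * x * y - (ν - 1) * y ^ 2) := by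
  have hc : 0 < (μ - ν + 1) * y ^ 2 := by nlinarith
  have hx2 : μ * y ^ 2 ≤ μ * x ^ 2 :=
    mul_le_mul_of_nonneg_left (pow_le_pow_left₀ hy.le hyx 2) hμ
  have hxy : μ * y ^ 2 ≤ μ * x * y := by
    rw [mul_assoc]
    exact mul_le_mul_of_nonneg_left (by nlinarith) hμ
  nlinarith

namespace SimpleGraph

variable {V : Type*} [Fintype V] [DecidableEq V] (G : SimpleGraph V) (a : ℝ)

noncomputable def alphaMatrix : Matrix V V ℝ := a • G.degMatrix ℝ + (1 - a) • G.adjMatrix ℝ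

theorem isHermitian_alphaMatrix : (G.alphaMatrix a).IsHermitian :=
  ((G.isHermitian_degMatrix ℝ).smul (IsSelfAdjoint.all _)).add
    ((G.isHermitian_adjMatrix ℝ).smul (IsSelfAdjoint.all _))

theorem alphaMatrix_apply_self (u : V) : G.alphaMatrix a u u = a * G.degree u := by
  simp [alphaMatrix, degMatrix]

theorem alphaMatrix_nonneg {a : ℝ} (h0 : 0 ≤ a) (h1 : a ≤ 1) (u v : V) :
    0 ≤ G.alphaMatrix a u v := by
  by_cases h : u = v
  · subst h
    rw [alphaMatrix_apply_self]
    positivity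
  · simp only [alphaMatrix, degMatrix, Matrix.add_apply, Matrix.smul_apply, diagonal_apply_ne _ h,
      adjMatrix_apply, smul_eq_mul]
    split_ifs <;> linarith

theorem alphaMatrix_mulVec_apply (x : V → ℝ) (u : V) :
    (G.alphaMatrix a *ᵥ x) u
      = a * G.degree u * x u + (1 - a) * ∑ v ∈ G.neighborFinset u, x v := by
  simp [alphaMatrix, add_mulVec, smul_mulVec, degMatrix_mulVec_apply, adjMatrix_mulVec_apply,
    mul_assoc]

variable {G a}

theorem eq_zero_of_adj_of_mulVec_eq_smul (ha : a < 1) {y : V → ℝ} {ρ : ℝ} (hy0 : 0 ≤ y)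
    (hy : G.alphaMatrix a *ᵥ y = ρ • y) {u v : V} (hu : y u = 0) (huv : G.Adj u v) :
    y v = 0 := by
  have h := congrFun hy u
  simp only [alphaMatrix_mulVec_apply, Pi.smul_apply, smul_eq_mul, hu] at h
  have hsum : ∑ w ∈ G.neighborFinset u, y w = 0 := by
    simpa [(sub_pos.2 ha).ne'] using h
  exact (Finset.sum_eq_zero_iff_of_nonneg fun w _ => hy0 w).1 hsum v (by simpa using huv)

end SimpleGraph

def joinCliques {q : ℕ} (s : ℕ) (m : Fin q → ℕ) : SimpleGraph (Fin s ⊕ Σ k, Fin (m k)) :=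
  graphJoin (⊤ : SimpleGraph (Fin s)) (cliquesUnion m)

namespace JoinCliques

section Structure

variable {s q : ℕ} {m : Fin q → ℕ}

@[simp] theorem adj_inl_inl {a a' : Fin s} :
    (joinCliques s m).Adj (.inl a) (.inl a') ↔ a ≠ a' := by
  simp [joinCliques, graphJoin]

@[simp] theorem adj_inl_inr {a : Fin s} {σ : Σ k, Fin (m k)} :
    (joinCliques s m).Adj (.inl a) (.inr σ) := by
  simp [joinCliques, graphJoin]

@[simp] theorem adj_inr_inr {σ τ : Σ k, Fin (m k)} :
    (joinCliques s m).Adj (.inr σ) (.inr τ) ↔ σ.1 = τ.1 ∧ σ ≠ τ := Iff.rfl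

@[simp] theorem adj_inr_inl {a : Fin s} {σ : Σ k, Fin (m k)} :
    (joinCliques s m).Adj (.inr σ) (.inl a) := by
  simp [joinCliques, graphJoin]

theorem adj_inl_of_ne (a : Fin s) {v : Fin s ⊕ Σ k, Fin (m k)} (hv : v ≠ .inl a) :
    (joinCliques s m).Adj (.inl a) v := by
  rcases v with a' | σ
  · simpa [eq_comm] using hv
  · simp

def hubSum (x : (Fin s ⊕ Σ k, Fin (m k)) → ℝ) : ℝ := ∑ a, x (.inl a)

def blockSum (x : (Fin s ⊕ Σ k, Fin (m k)) → ℝ) (k : Fin q) : ℝ := ∑ t, x (.inr ⟨k, t⟩)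

theorem sum_eq_hubSum_add_sum_blockSum (x : (Fin s ⊕ Σ k, Fin (m k)) → ℝ) :
    ∑ v, x v = hubSum x + ∑ k, blockSum x k := by
  rw [Fintype.sum_sum_type, ← Finset.univ_sigma_univ, Finset.sum_sigma]
  rfl

theorem sum_neighborFinset_inl (x : (Fin s ⊕ Σ k, Fin (m k)) → ℝ) (a : Fin s) :
    ∑ v ∈ (joinCliques s m).neighborFinset (.inl a), x v
      = hubSum x + ∑ k, blockSum x k - x (.inl a) := by
  have : (joinCliques s m).neighborFinset (.inl a) = Finset.univ.erase (.inl a) := by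
    ext v
    simp only [SimpleGraph.mem_neighborFinset, Finset.mem_erase, Finset.mem_univ, and_true]
    exact ⟨fun h => (h.ne).symm, adj_inl_of_ne a⟩
  rw [this, Finset.sum_erase_eq_sub (Finset.mem_univ _), sum_eq_hubSum_add_sum_blockSum]

theorem sum_neighborFinset_inr (x : (Fin s ⊕ Σ k, Fin (m k)) → ℝ) (k : Fin q) (t : Fin (m k)) :
    ∑ v ∈ (joinCliques s m).neighborFinset (.inr ⟨k, t⟩), x v
      = hubSum x + blockSum x k - x (.inr ⟨k, t⟩) := by
  have hblock : ∑ σ ∈ Finset.univ.filter (fun σ : Σ k, Fin (m k) => σ.1 = k), x (.inr σ)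
      = blockSum x k := by
    rw [Finset.sum_filter, ← Finset.univ_sigma_univ, Finset.sum_sigma,
      Finset.sum_eq_single k (fun k' _ hk' => by simp [hk']) (by simp)]
    simp [blockSum]
  rw [SimpleGraph.neighborFinset_eq_filter, Finset.sum_filter, Fintype.sum_sum_type]
  have hfilter : Finset.univ.filter (fun σ : Σ k, Fin (m k) => k = σ.1 ∧ ⟨k, t⟩ ≠ σ)
      = (Finset.univ.filter (fun σ : Σ k, Fin (m k) => σ.1 = k)).erase ⟨k, t⟩ := by
    ext σ
    simp only [Finset.mem_filter, Finset.mem_erase, Finset.mem_univ, true_and]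
    tauto
  simp only [adj_inr_inl, adj_inr_inr, if_true, ← Finset.sum_filter, hfilter]
  rw [Finset.sum_erase_eq_sub (by simp), hblock, hubSum]
  ring

theorem dotProduct_self_eq_hubSum_add (x : (Fin s ⊕ Σ k, Fin (m k)) → ℝ) :
    x ⬝ᵥ x = hubSum (x * x) + ∑ k, blockSum (x * x) k :=
  sum_eq_hubSum_add_sum_blockSum (x * x)

theorem degree_inl (a : Fin s) :
    ((joinCliques s m).degree (.inl a) : ℝ) = s + ∑ k, (m k : ℝ) - 1 := by
  simpa [hubSum, blockSum] using sum_neighborFinset_inl (s := s) (m := m) 1 a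

theorem degree_inr (k : Fin q) (t : Fin (m k)) :
    ((joinCliques s m).degree (.inr ⟨k, t⟩) : ℝ) = s + m k - 1 := by
  simpa [hubSum, blockSum] using sum_neighborFinset_inr (s := s) (m := m) 1 k t

variable (α : ℝ)

theorem alphaMatrix_mulVec_inl (x : (Fin s ⊕ Σ k, Fin (m k)) → ℝ) (a : Fin s) :
    ((joinCliques s m).alphaMatrix α *ᵥ x) (.inl a)
      = α * (s + ∑ k, (m k : ℝ) - 1) * x (.inl a)
        + (1 - α) * (hubSum x + ∑ k, blockSum x k - x (.inl a)) := by
  rw [SimpleGraph.alphaMatrix_mulVec_apply, degree_inl, sum_neighborFinset_inl]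

theorem alphaMatrix_mulVec_inr (x : (Fin s ⊕ Σ k, Fin (m k)) → ℝ) (k : Fin q) (t : Fin (m k)) :
    ((joinCliques s m).alphaMatrix α *ᵥ x) (.inr ⟨k, t⟩)
      = α * (s + m k - 1) * x (.inr ⟨k, t⟩)
        + (1 - α) * (hubSum x + blockSum x k - x (.inr ⟨k, t⟩)) := by
  rw [SimpleGraph.alphaMatrix_mulVec_apply, degree_inr, sum_neighborFinset_inr]

theorem dotProduct_alphaMatrix_mulVec (x : (Fin s ⊕ Σ k, Fin (m k)) → ℝ) :
    x ⬝ᵥ (joinCliques s m).alphaMatrix α *ᵥ x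
      = (α * (s + ∑ k, (m k : ℝ) - 1) - (1 - α)) * hubSum (x * x)
          + (1 - α) * (hubSum x + ∑ k, blockSum x k) * hubSum x
        + ∑ k, ((α * (s + m k - 1) - (1 - α)) * blockSum (x * x) k
          + (1 - α) * (hubSum x + blockSum x k) * blockSum x k) := by
  rw [dotProduct, sum_eq_hubSum_add_sum_blockSum]
  congr 1
  · have h (a : Fin s) : x (.inl a) * ((joinCliques s m).alphaMatrix α *ᵥ x) (.inl a)
        = (α * (s + ∑ k, (m k : ℝ) - 1) - (1 - α)) * (x * x) (.inl a)
          + (1 - α) * (hubSum x + ∑ k, blockSum x k) * x (.inl a) := by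
      rw [alphaMatrix_mulVec_inl, Pi.mul_apply]
      ring
    simp only [hubSum, h, Finset.sum_add_distrib, ← Finset.mul_sum]
  · refine Finset.sum_congr rfl fun k _ => ?_
    have h (t : Fin (m k)) :
        x (.inr ⟨k, t⟩) * ((joinCliques s m).alphaMatrix α *ᵥ x) (.inr ⟨k, t⟩)
        = (α * (s + m k - 1) - (1 - α)) * (x * x) (.inr ⟨k, t⟩)
          + (1 - α) * (hubSum x + blockSum x k) * x (.inr ⟨k, t⟩) := by
      rw [alphaMatrix_mulVec_inr, Pi.mul_apply]
      ring
    simp only [blockSum, h, Finset.sum_add_distrib, ← Finset.mul_sum]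

end Structure

section PerronVector

variable {s q : ℕ} {m : Fin q → ℕ} {α ρ : ℝ} {y : (Fin s ⊕ Σ k, Fin (m k)) → ℝ}

theorem pos_of_mulVec_eq_smul (hs : 0 < s) (hα : α < 1) (hy_ne : y ≠ 0) (hy0 : 0 ≤ y)
    (hy : (joinCliques s m).alphaMatrix α *ᵥ y = ρ • y) (v : Fin s ⊕ Σ k, Fin (m k)) :
    0 < y v := by
  set hub : Fin s ⊕ Σ k, Fin (m k) := .inl ⟨0, hs⟩
  have hhub : y hub ≠ 0 := fun h0 => hy_ne <| funext fun w => by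
    by_cases hw : w = hub
    · exact hw ▸ h0
    · exact SimpleGraph.eq_zero_of_adj_of_mulVec_eq_smul hα hy0 hy h0
        (adj_inl_of_ne _ hw)
  refine (hy0 v).lt_of_ne' fun hv => hhub ?_
  by_cases hvh : v = hub
  · exact hvh ▸ hv
  · exact SimpleGraph.eq_zero_of_adj_of_mulVec_eq_smul hα hy0 hy hv
      (adj_inl_of_ne _ hvh).symm

theorem mul_apply_inr_of_mulVec_eq_smul (hy : (joinCliques s m).alphaMatrix α *ᵥ y = ρ • y)
    (k : Fin q) (t : Fin (m k)) :
    (ρ - α * (s + m k - 1) + (1 - α)) * y (.inr ⟨k, t⟩) = (1 - α) * (hubSum y + blockSum y k) := by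
  have h := congrFun hy (.inr ⟨k, t⟩)
  rw [alphaMatrix_mulVec_inr, Pi.smul_apply, smul_eq_mul] at h
  linarith

/-- On a block vertex the eigen-equation reads `c_k y v = (1 - α) (hubSum y + blockSum y k)` with
`c_k > 0` because the top eigenvalue dominates the diagonal, so `y v` depends on `k` only. -/
theorem exists_eq_sumElim_of_mulVec_eq_maxEigenvalue_smul (hα : α < 1)
    (hy : (joinCliques s m).alphaMatrix α *ᵥ y
      = ((joinCliques s m).alphaMatrix α).maxEigenvalue • y) :
    ∃ (h : Fin s → ℝ) (b : Fin q → ℝ), y = Sum.elim h (fun σ => b σ.1) := by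
  have hcoef (k : Fin q) (t : Fin (m k)) :
      0 < ((joinCliques s m).alphaMatrix α).maxEigenvalue - α * (s + m k - 1) + (1 - α) := by
    have hdiag := ((joinCliques s m).isHermitian_alphaMatrix α).apply_self_le_maxEigenvalue
      (.inr ⟨k, t⟩)
    rw [SimpleGraph.alphaMatrix_apply_self, degree_inr] at hdiag
    linarith
  refine ⟨fun a => y (.inl a), fun k => if hk : 0 < m k then y (.inr ⟨k, ⟨0, hk⟩⟩) else 0, ?_⟩
  ext (a | ⟨k, t⟩)
  · rfl
  · have h0 : 0 < m k := t.pos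
    simp only [Sum.elim_inr, h0, dite_true]
    refine mul_left_cancel₀ (hcoef k t).ne' ?_
    rw [mul_apply_inr_of_mulVec_eq_smul hy, ← mul_apply_inr_of_mulVec_eq_smul hy]

theorem blockSum_sumElim (h : Fin s → ℝ) (b : Fin q → ℝ) (k : Fin q) :
    blockSum (Sum.elim h (fun σ => b σ.1) : (Fin s ⊕ Σ k, Fin (m k)) → ℝ) k = m k * b k := by
  simp [blockSum]

variable {h : Fin s → ℝ} {b : Fin q → ℝ}

theorem mul_eq_of_mulVec_sumElim_eq_smul
    (hy : (joinCliques s m).alphaMatrix α *ᵥ Sum.elim h (fun σ => b σ.1)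
      = ρ • Sum.elim h (fun σ => b σ.1)) {k : Fin q} (hk : 0 < m k) :
    (ρ + 1 - α * s - m k) * b k = (1 - α) * ∑ a, h a := by
  have := mul_apply_inr_of_mulVec_eq_smul hy k ⟨0, hk⟩
  rw [blockSum_sumElim] at this
  simp only [hubSum, Sum.elim_inl, Sum.elim_inr] at this
  linear_combination this

theorem le_of_mulVec_sumElim_eq_smul (hα : α < 1) (hh : 0 < ∑ a, h a)
    (hy : (joinCliques s m).alphaMatrix α *ᵥ Sum.elim h (fun σ => b σ.1)
      = ρ • Sum.elim h (fun σ => b σ.1)) {i j : Fin q} (hbi : 0 ≤ b i) (hbj : 0 < b j)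
    (hj : 0 < m j) (hji : m j ≤ m i) : b j ≤ b i := by
  have hei := mul_eq_of_mulVec_sumElim_eq_smul hy (hj.trans_le hji)
  have hej := mul_eq_of_mulVec_sumElim_eq_smul hy hj
  have hm : (m j : ℝ) ≤ m i := by exact_mod_cast hji
  have hR : 0 < (1 - α) * ∑ a, h a := mul_pos (sub_pos.2 hα) hh
  have hcj : 0 < ρ + 1 - α * s - m j := by
    by_contra! hc
    nlinarith [mul_nonpos_of_nonpos_of_nonneg hc hbj.le]
  by_contra! hlt
  have hc : ρ + 1 - α * s - m i ≤ ρ + 1 - α * s - m j := by linarith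
  nlinarith [mul_le_mul_of_nonneg_right hc hbi, mul_lt_mul_of_pos_left hlt hcj]

end PerronVector

section ShiftVertex

variable {s q : ℕ} {m : Fin q → ℕ} {i j : Fin q}

def shiftBlocks (m : Fin q → ℕ) (i j : Fin q) : Fin q → ℕ :=
  Function.update (Function.update m i (m i + 1)) j (m j - 1)

theorem shiftBlocks_left (hij : i ≠ j) : shiftBlocks m i j i = m i + 1 := by
  simp [shiftBlocks, hij]

theorem shiftBlocks_right : shiftBlocks m i j j = m j - 1 := by
  simp [shiftBlocks]

theorem shiftBlocks_of_ne {k : Fin q} (hki : k ≠ i) (hkj : k ≠ j) : shiftBlocks m i j k = m k := by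
  simp [shiftBlocks, hki, hkj]

theorem sum_cast_shiftBlocks (hij : i ≠ j) (hj : 1 ≤ m j) :
    ∑ k, (shiftBlocks m i j k : ℝ) = ∑ k, (m k : ℝ) := by
  rw [← sub_eq_zero, Fintype.sum_sub_sum_of_eq_off_pair hij
    fun k hki hkj => by rw [shiftBlocks_of_ne hki hkj], shiftBlocks_left hij, shiftBlocks_right]
  push_cast [hj]
  ring

/-- The vertex moved into block `i` (the new last one, of index `m i`) keeps the value `b j` of
its old block. -/
def shiftVector (m : Fin q → ℕ) (h : Fin s → ℝ) (b : Fin q → ℝ) (i j : Fin q) :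
    (Fin s ⊕ Σ k, Fin (shiftBlocks m i j k)) → ℝ :=
  Sum.elim h fun σ => if σ.1 = i ∧ (σ.2 : ℕ) = m i then b j else b σ.1

variable (h : Fin s → ℝ) (b : Fin q → ℝ)

theorem shiftVector_mul_self :
    shiftVector m h b i j * shiftVector m h b i j = shiftVector m (h * h) (b * b) i j := by
  ext (a | ⟨k, t⟩)
  · rfl
  · simp only [shiftVector, Pi.mul_apply, Sum.elim_inr]
    split_ifs <;> rfl

theorem sumElim_mul_self :
    (Sum.elim h (fun σ => b σ.1) * Sum.elim h (fun σ => b σ.1) : (Fin s ⊕ Σ k, Fin (m k)) → ℝ)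
      = Sum.elim (h * h) (fun σ => (b * b) σ.1) := by
  rw [← Sum.elim_mul_mul]
  rfl

@[simp] theorem hubSum_shiftVector : hubSum (shiftVector m h b i j) = ∑ a, h a := rfl

@[simp] theorem hubSum_sumElim :
    hubSum (Sum.elim h (fun σ => b σ.1) : (Fin s ⊕ Σ k, Fin (m k)) → ℝ) = ∑ a, h a := rfl

theorem blockSum_shiftVector_left (hij : i ≠ j) :
    blockSum (shiftVector m h b i j) i = m i * b i + b j := by
  simp only [blockSum, shiftVector, Sum.elim_inr, true_and]
  rw [Fin.sum_univ_eq_sum_range (fun r => if r = m i then b j else b i), shiftBlocks_left hij,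
    Finset.sum_range_succ, if_pos rfl, Finset.sum_congr rfl fun r hr =>
      if_neg (Finset.mem_range.1 hr).ne]
  simp

theorem blockSum_shiftVector_of_ne {k : Fin q} (hki : k ≠ i) :
    blockSum (shiftVector m h b i j) k = shiftBlocks m i j k * b k := by
  simp [blockSum, shiftVector, hki]

theorem sum_blockSum_shiftVector (hij : i ≠ j) (hj : 1 ≤ m j) :
    ∑ k, blockSum (shiftVector m h b i j) k
      = ∑ k, blockSum (Sum.elim h (fun σ => b σ.1) : (Fin s ⊕ Σ k, Fin (m k)) → ℝ) k := by
  rw [← sub_eq_zero, Fintype.sum_sub_sum_of_eq_off_pair hij fun k hki hkj => by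
      rw [blockSum_shiftVector_of_ne _ _ hki, blockSum_sumElim, shiftBlocks_of_ne hki hkj],
    blockSum_shiftVector_left _ _ hij, blockSum_shiftVector_of_ne _ _ hij.symm, shiftBlocks_right,
    blockSum_sumElim, blockSum_sumElim]
  push_cast [hj]
  ring

theorem dotProduct_self_shiftVector (hij : i ≠ j) (hj : 1 ≤ m j) :
    shiftVector m h b i j ⬝ᵥ shiftVector m h b i j
      = (Sum.elim h (fun σ => b σ.1) : (Fin s ⊕ Σ k, Fin (m k)) → ℝ)
        ⬝ᵥ Sum.elim h (fun σ => b σ.1) := by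
  rw [dotProduct_self_eq_hubSum_add, dotProduct_self_eq_hubSum_add, shiftVector_mul_self,
    sumElim_mul_self, sum_blockSum_shiftVector _ _ hij hj]
  rfl

variable (α : ℝ)

/-- Moving the vertex creates its `m i` edges into block `i` and deletes its `m j - 1` edges inside
block `j`; an edge `uv` contributes `α (x u ^ 2 + x v ^ 2) + 2 (1 - α) x u x v` to the form. -/
theorem dotProduct_alphaMatrix_shiftVector_sub (hij : i ≠ j) (hj : 1 ≤ m j) :
    shiftVector m h b i j ⬝ᵥ
        (joinCliques s (shiftBlocks m i j)).alphaMatrix α *ᵥ shiftVector m h b i j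
      - (Sum.elim h (fun σ => b σ.1) : (Fin s ⊕ Σ k, Fin (m k)) → ℝ)
        ⬝ᵥ (joinCliques s m).alphaMatrix α *ᵥ Sum.elim h (fun σ => b σ.1)
      = α * (m i * (b i ^ 2 + b j ^ 2) - 2 * (m j - 1) * b j ^ 2)
        + 2 * (1 - α) * (m i * b i * b j - (m j - 1) * b j ^ 2) := by
  rw [dotProduct_alphaMatrix_mulVec, dotProduct_alphaMatrix_mulVec, sum_cast_shiftBlocks hij hj,
    sum_blockSum_shiftVector _ _ hij hj, shiftVector_mul_self, sumElim_mul_self]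
  simp only [hubSum_shiftVector, hubSum_sumElim]
  rw [add_sub_add_left_eq_sub, Fintype.sum_sub_sum_of_eq_off_pair hij
      fun k hki hkj => by
        rw [blockSum_shiftVector_of_ne _ _ hki, blockSum_shiftVector_of_ne _ _ hki,
          shiftBlocks_of_ne hki hkj, blockSum_sumElim, blockSum_sumElim],
    blockSum_shiftVector_left _ _ hij, blockSum_shiftVector_left _ _ hij,
    blockSum_shiftVector_of_ne _ _ hij.symm, blockSum_shiftVector_of_ne _ _ hij.symm,
    shiftBlocks_left hij, shiftBlocks_right]
  simp only [blockSum_sumElim]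
  push_cast [Pi.mul_apply, hj]
  ring

end ShiftVertex

end JoinCliques

open JoinCliques

theorem rhoAlpha_shift_lt_general
    (α : ℝ) (hα0 : 0 ≤ α) (hα1 : α < 1)
    (s q : ℕ) (hs : 1 ≤ s)
    (m : Fin q → ℕ) (hpos : ∀ k, 1 ≤ m k)
    (i j : Fin q) (hij : i ≠ j) (hji : m j ≤ m i) :
    rhoAlpha α (graphJoin (⊤ : SimpleGraph (Fin s)) (cliquesUnion m)) <
      rhoAlpha α (graphJoin (⊤ : SimpleGraph (Fin s))
        (cliquesUnion (Function.update (Function.update m i (m i + 1)) j (m j - 1)))) := by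
  change ((joinCliques s m).alphaMatrix α).maxEigenvalue
    < ((joinCliques s (shiftBlocks m i j)).alphaMatrix α).maxEigenvalue
  have : Nonempty (Fin s ⊕ Σ k, Fin (m k)) := ⟨.inl ⟨0, hs⟩⟩
  obtain ⟨y, hy_ne, hy0, hy⟩ := ((joinCliques s m).isHermitian_alphaMatrix α)
    |>.exists_nonneg_mulVec_eq_maxEigenvalue_smul (SimpleGraph.alphaMatrix_nonneg _ hα0 hα1.le)
  have hy_pos := pos_of_mulVec_eq_smul hs hα1 hy_ne hy0 hy
  obtain ⟨h, b, rfl⟩ := exists_eq_sumElim_of_mulVec_eq_maxEigenvalue_smul hα1 hy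
  have hb (k : Fin q) : 0 < b k := hy_pos (.inr ⟨k, ⟨0, hpos k⟩⟩)
  have hbji : b j ≤ b i := le_of_mulVec_sumElim_eq_smul hα1
    (Finset.sum_pos (fun a _ => hy_pos (.inl a)) ⟨⟨0, hs⟩, Finset.mem_univ _⟩) hy (hb i).le (hb j)
    (hpos j) hji
  have hnorm : 0 < (Sum.elim h (fun σ => b σ.1) : (Fin s ⊕ Σ k, Fin (m k)) → ℝ)
      ⬝ᵥ Sum.elim h (fun σ => b σ.1) :=
    Finset.sum_pos (fun v _ => mul_pos (hy_pos v) (hy_pos v)) Finset.univ_nonempty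
  have hgain := dotProduct_alphaMatrix_shiftVector_sub h b α hij (hpos j)
  rw [hy, dotProduct_smul, smul_eq_mul] at hgain
  have hgain_pos :=
    shift_gain_pos hα0 hα1.le (Nat.cast_nonneg (m i)) (Nat.cast_le.2 hji) (hb j) hbji
  have hrayleigh := ((joinCliques s (shiftBlocks m i j)).isHermitian_alphaMatrix α)
    |>.dotProduct_mulVec_le (shiftVector m h b i j)
  rw [dotProduct_self_shiftVector h b hij (hpos j)] at hrayleigh
  exact lt_of_mul_lt_mul_right (by linarith) hnorm.le

/-- **Lemma 2.3** (Wu, Wang and Kang).  Let `α ∈ [0,1)`, `s ≥ 1`, `q ≥ 2`, and let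
`n₁, …, n_q` be positive integers with `∑ n_k = n - s`.  If `i ≠ j` and `n_i ≥ n_j`,
then moving one vertex from the `j`-th complete block to the `i`-th one strictly
increases the `A_α`-spectral radius of `K_s ∨ (K_{n₁} ∪ ⋯ ∪ K_{n_q})`. -/
theorem rhoAlpha_shift_lt
    (α : ℝ) (hα0 : 0 ≤ α) (hα1 : α < 1)
    (s q n : ℕ) (hs : 1 ≤ s) (hq : 2 ≤ q)
    (m : Fin q → ℕ) (hpos : ∀ k, 1 ≤ m k) (hsum : ∑ k, m k = n - s)
    (i j : Fin q) (hij : i ≠ j) (hji : m j ≤ m i) :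
    rhoAlpha α (graphJoin (⊤ : SimpleGraph (Fin s)) (cliquesUnion m)) <
      rhoAlpha α (graphJoin (⊤ : SimpleGraph (Fin s))
        (cliquesUnion (Function.update (Function.update m i (m i + 1)) j (m j - 1)))) :=
  rhoAlpha_shift_lt_general α hα0 hα1 s q hs m hpos i j hij hji
end
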